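/- Let B be an m-by-m real matrix that is diagonalizable over ℝ, with spectral decomposition B = ∑_{j=1}^k μ_j P_j where the μ_j are real, the P_j are the (possibly non-orthogonal) spectral projections satisfying P_i P_j = δ_{ij} P_i and ∑ P_j = Id. Define T := ∑_{j=1}^k P_jᵀ P_j. Then T is symmetric, T is positive definite with T ≥ (1/k²)·Id in the sense of quadratic forms, and the product T·B is symmetric. -/

import Mathlib

/-!
The quadratic form of `T = ∑ Pⱼᵀ Pⱼ` is `∑ |Pⱼ W|²`. Since `W = ∑ Pⱼ W`, Cauchy–Schwarz over the
`k` summands gives `|W|² ≤ k ∑ |Pⱼ W|²`, which is stronger than the bound `T ≥ k⁻² Id`. The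
relations `Pⱼ Pᵢ = δᵢⱼ Pⱼ` collapse `T B` to `∑ μⱼ Pⱼᵀ Pⱼ`, a sum of symmetric matrices.
-/

open Matrix

namespace Matrix

variable {ι n R : Type*} [Fintype ι] [Fintype n]

section CommRing

variable [CommRing R]

theorem isSymm_sum_transpose_mul_self (P : ι → Matrix n n R) :
    (∑ j, (P j)ᵀ * P j).IsSymm := by
  simp only [IsSymm, transpose_sum, transpose_mul, transpose_transpose]

theorem dotProduct_sum_transpose_mul_self_mulVec (P : ι → Matrix n n R) (W : n → R) :
    W ⬝ᵥ (∑ j, (P j)ᵀ * P j) *ᵥ W = ∑ j, (P j *ᵥ W) ⬝ᵥ (P j *ᵥ W) := by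
  simp only [sum_mulVec, dotProduct_sum, ← mulVec_mulVec, dotProduct_mulVec, vecMul_transpose]

theorem sum_transpose_mul_self_mul_sum_smul [DecidableEq ι] {P : ι → Matrix n n R}
    (hP : ∀ i j, P i * P j = if i = j then P i else 0) (μ : ι → R) :
    (∑ j, (P j)ᵀ * P j) * ∑ j, μ j • P j = ∑ j, μ j • ((P j)ᵀ * P j) := by
  simp only [Finset.sum_mul, Finset.mul_sum, Matrix.mul_smul, Matrix.mul_assoc, hP, mul_ite,
    Matrix.mul_zero, smul_ite, smul_zero, Finset.sum_ite_eq', Finset.mem_univ, if_true]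

theorem isSymm_sum_smul_transpose_mul_self (P : ι → Matrix n n R) (μ : ι → R) :
    (∑ j, μ j • ((P j)ᵀ * P j)).IsSymm := by
  simp only [IsSymm, transpose_sum, transpose_smul, transpose_mul, transpose_transpose]

end CommRing

section Ordered

variable [CommRing R] [LinearOrder R] [IsStrictOrderedRing R]

theorem sum_dotProduct_sum_self_le_card_mul (v : ι → n → R) :
    (∑ j, v j) ⬝ᵥ (∑ j, v j) ≤ Fintype.card ι * ∑ j, v j ⬝ᵥ v j := by
  simp only [dotProduct, Finset.sum_apply, ← sq]
  rw [Finset.sum_comm, Finset.mul_sum]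
  gcongr
  exact sq_sum_le_card_mul_sum_sq

theorem dotProduct_sum_transpose_mul_self_mulVec_nonneg (P : ι → Matrix n n R) (W : n → R) :
    0 ≤ W ⬝ᵥ (∑ j, (P j)ᵀ * P j) *ᵥ W := by
  rw [dotProduct_sum_transpose_mul_self_mulVec]
  exact Finset.sum_nonneg fun j _ => Finset.sum_nonneg fun i _ => mul_self_nonneg _

theorem dotProduct_self_le_card_mul_sum_transpose_mul_self [DecidableEq n] {P : ι → Matrix n n R}
    (hP : ∑ j, P j = 1) (W : n → R) :
    W ⬝ᵥ W ≤ Fintype.card ι * (W ⬝ᵥ (∑ j, (P j)ᵀ * P j) *ᵥ W) := by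
  have hW : ∑ j, P j *ᵥ W = W := by rw [← sum_mulVec, hP, one_mulVec]
  rw [dotProduct_sum_transpose_mul_self_mulVec]
  conv_lhs => rw [← hW]
  exact sum_dotProduct_sum_self_le_card_mul _

theorem dotProduct_sum_transpose_mul_self_mulVec_pos [DecidableEq n] {P : ι → Matrix n n R}
    (hP : ∑ j, P j = 1) {W : n → R} (hW : W ≠ 0) :
    0 < W ⬝ᵥ (∑ j, (P j)ᵀ * P j) *ᵥ W := by
  have hpos : 0 < W ⬝ᵥ W :=
    lt_of_le_of_ne (Finset.sum_nonneg fun i _ => mul_self_nonneg _)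
      (Ne.symm (mt dotProduct_self_eq_zero.mp hW))
  have hbound := dotProduct_self_le_card_mul_sum_transpose_mul_self hP W
  exact pos_of_mul_pos_right (hpos.trans_le hbound) (Nat.cast_nonneg _)

end Ordered

end Matrix

theorem one_div_natCast_sq_mul_le {K : Type*} [Field K] [LinearOrder K] [IsStrictOrderedRing K]
    {a q : K} {k : ℕ} (hq : 0 ≤ q) (h : a ≤ k * q) : 1 / (k : K) ^ 2 * a ≤ q := by
  rcases Nat.eq_zero_or_pos k with rfl | hk
  · simpa using hq
  have hk' : (1 : K) ≤ k := Nat.one_le_cast.mpr hk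
  calc 1 / (k : K) ^ 2 * a ≤ 1 / (k : K) ^ 2 * (k * q) := by gcongr
    _ = q / k := by field_simp
    _ ≤ q := div_le_self hq hk'

theorem stmt_1_general
    (m k : ℕ)
    (B : Matrix (Fin m) (Fin m) ℝ) (μ : Fin k → ℝ) (P : Fin k → Matrix (Fin m) (Fin m) ℝ)
    (hB : B = ∑ j, μ j • P j)
    (hproj : ∀ i j, P i * P j = if i = j then P i else 0)
    (hsum : ∑ j, P j = 1) :
    (∑ j, (P j)ᵀ * P j).IsSymm ∧
    (∀ W : Fin m → ℝ, (1 / (k : ℝ) ^ 2) * (W ⬝ᵥ W) ≤ W ⬝ᵥ (∑ j, (P j)ᵀ * P j).mulVec W) ∧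
    (∀ W : Fin m → ℝ, W ≠ 0 → 0 < W ⬝ᵥ (∑ j, (P j)ᵀ * P j).mulVec W) ∧
    ((∑ j, (P j)ᵀ * P j) * B).IsSymm := by
  refine ⟨isSymm_sum_transpose_mul_self P, fun W => ?_,
    fun W hW => dotProduct_sum_transpose_mul_self_mulVec_pos hsum hW, ?_⟩
  · have h := dotProduct_self_le_card_mul_sum_transpose_mul_self hsum W
    rw [Fintype.card_fin] at h
    exact one_div_natCast_sq_mul_le (dotProduct_sum_transpose_mul_self_mulVec_nonneg P W) h
  · rw [hB, sum_transpose_mul_self_mul_sum_smul hproj]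
    exact isSymm_sum_smul_transpose_mul_self P μ

theorem stmt_1
    (m k : ℕ) (hk : 0 < k)
    (B : Matrix (Fin m) (Fin m) ℝ) (μ : Fin k → ℝ) (P : Fin k → Matrix (Fin m) (Fin m) ℝ)
    (hB : B = ∑ j, μ j • P j)
    (hproj : ∀ i j, P i * P j = if i = j then P i else 0)
    (hsum : ∑ j, P j = 1) :
    (∑ j, (P j)ᵀ * P j).IsSymm ∧
    (∀ W : Fin m → ℝ, (1 / (k : ℝ) ^ 2) * (W ⬝ᵥ W) ≤ W ⬝ᵥ (∑ j, (P j)ᵀ * P j).mulVec W) ∧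
    (∀ W : Fin m → ℝ, W ≠ 0 → 0 < W ⬝ᵥ (∑ j, (P j)ᵀ * P j).mulVec W) ∧
    ((∑ j, (P j)ᵀ * P j) * B).IsSymm :=
  stmt_1_general m k B μ P hB hproj hsum
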